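/- arXiv:2301.03246 — 2 statements merged into one kernel-verified Lean document; each statement's English description precedes it below -/
import Mathlib

section
/- Pathwise ACE formula for step treatments: let A: ℝ → ℝ be continuous with A(Δ)=0 for Δ ≤ 0, and suppose for each single event time τ, E[Y_τ(t) - Y_∅(t)] = -∫_τ^t A(t-s) ds. Then under additivity, for any two finite event-time configurations with step functions n(·), n'(·) (counting functions), E[Y_{n(·)}(t) - Y_{n'(·)}(t)] = -∫₀^t A(t-s)·{n(s) - n'(s)} ds. -/
/-!
Both sides are linear in the configuration: the left side by additivity, the right side because
`n(s) = ∑_τ 1[τ ≤ s]`. It therefore suffices to treat a single event at `τ ∈ [0, t]`, where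
`∫₀ᵗ A(t - s) 1[τ ≤ s] ds = ∫_τ^t A(t - s) ds` is exactly the single-event effect.
-/

open MeasureTheory intervalIntegral

/-- The counting function of a fixed finite configuration of event times. -/
noncomputable def countFn (l : List ℝ) (s : ℝ) : ℝ :=
  (l.map (fun τ => if τ ≤ s then (1:ℝ) else 0)).sum

open Set

theorem List.sum_map_neg {α G : Type*} [AddCommGroup G] (l : List α) (g : α → G) :
    (l.map fun x => -g x).sum = -(l.map g).sum := by
  simpa [List.map_map, Function.comp_def] using
    (map_list_sum (negAddMonoidHom : G →+ G) (l.map g)).symm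

lemma countFn_nil (s : ℝ) : countFn [] s = 0 := rfl

lemma countFn_cons (τ s : ℝ) (l : List ℝ) :
    countFn (τ :: l) s = (Ici τ).indicator 1 s + countFn l s := by
  simp [countFn, indicator]

section

variable {μ : Measure ℝ} {f : ℝ → ℝ} {a b : ℝ}

lemma mul_countFn_cons (τ s : ℝ) (l : List ℝ) :
    f s * countFn (τ :: l) s = (Ici τ).indicator f s + f s * countFn l s := by
  rw [countFn_cons, mul_add, ← indicator_mul_right]
  simp only [Pi.one_apply, mul_one]

lemma IntervalIntegrable.indicator (hf : IntervalIntegrable f μ a b) {s : Set ℝ}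
    (hs : MeasurableSet s) : IntervalIntegrable (s.indicator f) μ a b :=
  intervalIntegrable_iff.2 ((intervalIntegrable_iff.1 hf).indicator hs)

lemma IntervalIntegrable.mul_countFn (hf : IntervalIntegrable f μ a b) (l : List ℝ) :
    IntervalIntegrable (fun s => f s * countFn l s) μ a b := by
  induction l with
  | nil =>
    simp only [countFn_nil, mul_zero]
    exact IntervalIntegrable.zero
  | cons τ l ih =>
    simp only [mul_countFn_cons]
    exact (hf.indicator measurableSet_Ici).add ih

lemma intervalIntegral.integral_indicator_Ici [NullSingletonClass μ] {τ : ℝ} (hτ : τ ∈ Icc a b) :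
    ∫ s in a..b, (Ici τ).indicator f s ∂μ = ∫ s in τ..b, f s ∂μ := by
  have hset : (Ioc a b ∩ Ici τ : Set ℝ) =ᵐ[μ] Ioc τ b := by
    rw [show Ioc τ b = Ioc a b ∩ Ioi τ by rw [Ioc_inter_Ioi, max_eq_right hτ.1]]
    exact (Filter.EventuallyEq.refl _ _).inter Ioi_ae_eq_Ici.symm
  rw [integral_of_le (hτ.1.trans hτ.2), integral_of_le hτ.2,
    setIntegral_indicator measurableSet_Ici, setIntegral_congr_set hset]

lemma integral_mul_countFn [NullSingletonClass μ] (hf : IntervalIntegrable f μ a b)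
    {l : List ℝ} (hl : ∀ τ ∈ l, τ ∈ Icc a b) :
    ∫ s in a..b, f s * countFn l s ∂μ = (l.map fun τ => ∫ s in τ..b, f s ∂μ).sum := by
  induction l with
  | nil => simp [countFn_nil]
  | cons τ l ih =>
    simp only [mul_countFn_cons]
    rw [integral_add (hf.indicator measurableSet_Ici) (hf.mul_countFn l),
      integral_indicator_Ici (hl τ List.mem_cons_self),
      ih fun τ' h => hl τ' (List.mem_cons_of_mem τ h), List.map_cons, List.sum_cons]

end

theorem pathwise_ace_step_treatments_general
    (t : ℝ) (A : ℝ → ℝ) (hA_cont : Continuous A)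
    (Eff : ℝ → ℝ) (e : List ℝ → ℝ)
    (hEff : ∀ τ : ℝ, Eff τ = -∫ s in τ..t, A (t - s))
    (hadd : ∀ l : List ℝ, e l = (l.map Eff).sum)
    (l l' : List ℝ)
    (hl : ∀ τ ∈ l, 0 ≤ τ ∧ τ ≤ t) (hl' : ∀ τ ∈ l', 0 ≤ τ ∧ τ ≤ t) :
    e l - e l' = -∫ s in (0:ℝ)..t, A (t - s) * (countFn l s - countFn l' s) := by
  have hK : IntervalIntegrable (fun s => A (t - s)) volume 0 t := by
    apply Continuous.intervalIntegrable
    fun_prop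
  have he : ∀ l : List ℝ, (∀ τ ∈ l, τ ∈ Icc 0 t) →
      e l = -∫ s in (0:ℝ)..t, A (t - s) * countFn l s := fun l hl => by
    rw [hadd, integral_mul_countFn hK hl, funext hEff, List.sum_map_neg]
  rw [he l hl, he l' hl']
  simp only [mul_sub]
  rw [integral_sub (hK.mul_countFn l) (hK.mul_countFn l')]
  ring

/-- Pathwise ACE formula for step treatments (Proposition 2): with a continuous
causal kernel `A` (`A(Δ)=0` for `Δ ≤ 0`), if the expected single-event effect is
`Eff τ = E[Y_τ(t) - Y_∅(t)] = -∫_τ^t A(t-s) ds` and additivity holds (the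
expected effect `e l` of a configuration `l` relative to the null process is the
sum of single-event effects), then for any two configurations,
`E[Y_{n(·)}(t) - Y_{n'(·)}(t)] = -∫₀^t A(t-s) (n(s) - n'(s)) ds`. -/
theorem pathwise_ace_step_treatments
    (t : ℝ) (ht : 0 ≤ t) (A : ℝ → ℝ) (hA_cont : Continuous A)
    (hA0 : ∀ Δ : ℝ, Δ ≤ 0 → A Δ = 0)
    (Eff : ℝ → ℝ) (e : List ℝ → ℝ)
    (hEff : ∀ τ : ℝ, Eff τ = -∫ s in τ..t, A (t - s))
    (hadd : ∀ l : List ℝ, e l = (l.map Eff).sum)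
    (l l' : List ℝ)
    (hl : ∀ τ ∈ l, 0 ≤ τ ∧ τ ≤ t) (hl' : ∀ τ ∈ l', 0 ≤ τ ∧ τ ≤ t) :
    e l - e l' = -∫ s in (0:ℝ)..t, A (t - s) * (countFn l s - countFn l' s) :=
  pathwise_ace_step_treatments_general t A hA_cont Eff e hEff hadd l l' hl hl'
end

section
/- ACER in the nonlinear additive-confounding model: if E[Y_τ(t)] = ∫₀^t φ(μ + g(s-τ)) ds + C(t), where φ is C¹, g is C¹ with g(Δ)=0 for Δ ≤ 0, and C(t) does not depend on τ, then ∂E[Y_τ(t)]/∂τ = φ(μ) - φ(μ + g(t-τ)) for τ ∈ [0, t]. -/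
open MeasureTheory intervalIntegral

/-! Substituting `u = s - τ` turns the integral into `∫ u in -τ..t-τ, φ (μc + g u)`, whose
`τ`-derivative is, by the fundamental theorem of calculus at both endpoints,
`φ (μc + g (-τ)) - φ (μc + g (t - τ))`; for `τ ≥ 0` the first term is `φ μc` since `g` vanishes
on `(-∞, 0]`. -/

theorem hasDerivAt_integral_comp_sub_right {E : Type*} [NormedAddCommGroup E] [NormedSpace ℝ E]
    [CompleteSpace E] {f : ℝ → E} (hf : Continuous f) (a b τ : ℝ) :
    HasDerivAt (fun τ' => ∫ s in a..b, f (s - τ')) (f (a - τ) - f (b - τ)) τ := by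
  have hprimitive (c : ℝ) : HasDerivAt (fun u => ∫ x in 0..u, f x) (f c) c :=
    (hf.integral_hasStrictDerivAt 0 c).hasDerivAt
  have hshift : (fun τ' => ∫ s in a..b, f (s - τ')) =
      fun τ' => (∫ x in 0..b - τ', f x) - ∫ x in 0..a - τ', f x := by
    funext τ'
    rw [integral_comp_sub_right, integral_interval_sub_left (hf.intervalIntegrable _ _)
      (hf.intervalIntegrable _ _)]
  rw [hshift]
  exact (((hprimitive (b - τ)).comp_const_sub b τ).sub
    ((hprimitive (a - τ)).comp_const_sub a τ)).congr_deriv (by abel)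

/-- ACER in the nonlinear additive-confounding model (Proposition 4(a)): if
`E[Y_τ(t)] = ∫₀^t φ(μc + g(s-τ)) ds + C(t)` with `φ, g` C¹ and `g(Δ)=0` for
`Δ ≤ 0`, then `∂E[Y_τ(t)]/∂τ = φ(μc) - φ(μc + g(t-τ))` for `τ ∈ [0,t]`. -/
theorem acer_nonlinear_additive_model
    (φ g : ℝ → ℝ) (hφ : ContDiff ℝ 1 φ) (hg : ContDiff ℝ 1 g)
    (hg0 : ∀ Δ : ℝ, Δ ≤ 0 → g Δ = 0)
    (μc t : ℝ) (C : ℝ → ℝ) :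
    ∀ τ ∈ Set.Icc (0:ℝ) t,
      HasDerivAt (fun τ' => (∫ s in (0:ℝ)..t, φ (μc + g (s - τ'))) + C t)
        (φ μc - φ (μc + g (t - τ))) τ := by
  intro τ hτ
  have hintegrand : Continuous fun u => φ (μc + g u) :=
    hφ.continuous.comp (continuous_const.add hg.continuous)
  have hstart : g (0 - τ) = 0 := hg0 _ (by linarith [hτ.1])
  simpa only [hstart, add_zero] using
    (hasDerivAt_integral_comp_sub_right hintegrand 0 t τ).add_const (C t)
end
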